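/- arXiv:2308.10506 — 5 statements merged into one kernel-verified Lean document; each statement's English description precedes it below -/
import Mathlib

section
/- Let v ∈ ℝⁿ be nonzero and X ∈ B_v(n,r) = {X : XᵀX = I_r, Xᵀv = 0}. The tangent space T = {Z ∈ ℝ^{n×r} : XᵀZ + ZᵀX = 0, Zᵀv = 0} has orthogonal complement (with respect to the trace inner product) equal to {XA + vξᵀ : A ∈ 𝕊^r, ξ ∈ ℝ^r}. -/
open Matrix

private lemma mul_vecMulVec' {n m r : ℕ} (M : Matrix (Fin m) (Fin n) ℝ) (a : Fin n → ℝ)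
    (b : Fin r → ℝ) : M * vecMulVec a b = vecMulVec (M *ᵥ a) b := by
  ext i j
  simp only [Matrix.mul_apply, vecMulVec_apply, Matrix.mulVec, dotProduct,
    Finset.sum_mul]
  exact Finset.sum_congr rfl fun k _ => by ring

private lemma transpose_vecMulVec' {n r : ℕ} (a : Fin n → ℝ) (b : Fin r → ℝ) :
    (vecMulVec a b)ᵀ = vecMulVec b a := by
  ext i j; simp [vecMulVec_apply, mul_comm]

private lemma vecMulVec_mul' {n m r : ℕ} (a : Fin r → ℝ) (b : Fin n → ℝ)
    (M : Matrix (Fin n) (Fin m) ℝ) : vecMulVec a b * M = vecMulVec a (Mᵀ *ᵥ b) := by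
  ext i j
  simp only [Matrix.mul_apply, vecMulVec_apply, Matrix.mulVec, dotProduct,
    Matrix.transpose_apply, Finset.mul_sum]
  exact Finset.sum_congr rfl fun k _ => by ring

private lemma vecMulVec_mulVec' {n r : ℕ} (a : Fin r → ℝ) (b : Fin n → ℝ) (x : Fin n → ℝ) :
    vecMulVec a b *ᵥ x = (b ⬝ᵥ x) • a := by
  ext i
  simp only [Matrix.mulVec, vecMulVec_apply, dotProduct, Pi.smul_apply, smul_eq_mul,
    Finset.sum_mul]
  exact Finset.sum_congr rfl fun k _ => by ring

private lemma frob_zero_aux {n r : ℕ} (M : Matrix (Fin n) (Fin r) ℝ)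
    (h : Matrix.trace (Mᵀ * M) = 0) : M = 0 := by
  have h' : ∑ j, ∑ i, M i j ^ 2 = 0 := by
    simpa [Matrix.trace, Matrix.mul_apply, Matrix.diag, sq] using h
  have hz : ∀ j ∈ Finset.univ, ∀ i ∈ Finset.univ, M i j ^ 2 = 0 := by
    have h1 := (Finset.sum_eq_zero_iff_of_nonneg (fun j _ =>
      Finset.sum_nonneg fun i _ => sq_nonneg (M i j))).mp h'
    intro j hj i hi
    exact (Finset.sum_eq_zero_iff_of_nonneg fun i _ => sq_nonneg (M i j)).mp (h1 j hj) i hi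
  ext i j
  simpa using pow_eq_zero_iff (n := 2) (by norm_num) |>.mp (hz j (Finset.mem_univ j) i (Finset.mem_univ i))

private lemma ortho_aux {n r : ℕ} (v : Fin n → ℝ) (X : Matrix (Fin n) (Fin r) ℝ)
    (A : Matrix (Fin r) (Fin r) ℝ) (ξ : Fin r → ℝ) (hA : Aᵀ = A)
    (Z : Matrix (Fin n) (Fin r) ℝ) (hZ1 : Xᵀ * Z + Zᵀ * X = 0) (hZ2 : Zᵀ *ᵥ v = 0) :
    Matrix.trace ((X * A + vecMulVec v ξ)ᵀ * Z) = 0 := by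
  have hK : Zᵀ * X = -(Xᵀ * Z) := by linear_combination (norm := abel) hZ1
  have t1 : Matrix.trace (A * (Xᵀ * Z)) = 0 := by
    have : Matrix.trace (A * (Xᵀ * Z)) = -Matrix.trace (A * (Xᵀ * Z)) := by
      calc Matrix.trace (A * (Xᵀ * Z)) = Matrix.trace ((A * (Xᵀ * Z))ᵀ) :=
            (Matrix.trace_transpose _).symm
        _ = Matrix.trace ((Xᵀ * Z)ᵀ * Aᵀ) := by rw [Matrix.transpose_mul]
        _ = Matrix.trace ((Zᵀ * X) * A) := by rw [Matrix.transpose_mul, Matrix.transpose_transpose, hA]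
        _ = Matrix.trace ((-(Xᵀ * Z)) * A) := by rw [hK]
        _ = -Matrix.trace ((Xᵀ * Z) * A) := by rw [Matrix.neg_mul, Matrix.trace_neg]
        _ = -Matrix.trace (A * (Xᵀ * Z)) := by rw [Matrix.trace_mul_comm]
    linarith
  have t2 : Matrix.trace (vecMulVec ξ v * Z) = 0 := by
    have : ∀ i, (vecMulVec ξ v * Z) i i = ξ i * (Zᵀ *ᵥ v) i := by
      intro i
      simp [Matrix.mul_apply, vecMulVec_apply, Matrix.mulVec, dotProduct,
        Finset.mul_sum, mul_comm, mul_left_comm]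
    simp [Matrix.trace, Matrix.diag, this, hZ2]
  have expand : (X * A + vecMulVec v ξ)ᵀ * Z
      = Aᵀ * (Xᵀ * Z) + vecMulVec ξ v * Z := by
    rw [Matrix.transpose_add, Matrix.transpose_mul, transpose_vecMulVec', Matrix.add_mul,
      Matrix.mul_assoc]
  rw [expand, Matrix.trace_add, hA, t1, t2, add_zero]

/-- For `X` in the restricted Stiefel manifold `B_v(n,r)` (`v ≠ 0`), a matrix `W` is
orthogonal (trace inner product) to the tangent space
`{Z : XᵀZ + ZᵀX = 0, Zᵀv = 0}` iff `W = XA + vξᵀ` for some symmetric `A` and `ξ ∈ ℝ^r`. -/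
theorem normal_space_restricted_stiefel {n r : ℕ} (v : Fin n → ℝ) (hv : v ≠ 0)
    (X : Matrix (Fin n) (Fin r) ℝ) (hX : Xᵀ * X = 1) (hXv : Xᵀ *ᵥ v = 0)
    (W : Matrix (Fin n) (Fin r) ℝ) :
    (∀ Z : Matrix (Fin n) (Fin r) ℝ,
        Xᵀ * Z + Zᵀ * X = 0 → Zᵀ *ᵥ v = 0 → Matrix.trace (Wᵀ * Z) = 0) ↔
    (∃ A : Matrix (Fin r) (Fin r) ℝ, ∃ ξ : Fin r → ℝ,
        Aᵀ = A ∧ W = X * A + vecMulVec v ξ) := by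
  constructor
  · intro h
    have hvv : v ⬝ᵥ v ≠ 0 := fun hc => hv (by simpa using (dotProduct_self_eq_zero).mp hc)
    set A : Matrix (Fin r) (Fin r) ℝ := (2:ℝ)⁻¹ • (Xᵀ * W + Wᵀ * X) with hAdef
    set ξ : Fin r → ℝ := (v ⬝ᵥ v)⁻¹ • (Wᵀ *ᵥ v) with hξdef
    have hA : Aᵀ = A := by
      rw [hAdef, Matrix.transpose_smul, Matrix.transpose_add, Matrix.transpose_mul,
        Matrix.transpose_mul, Matrix.transpose_transpose, Matrix.transpose_transpose, add_comm]
    set Z : Matrix (Fin n) (Fin r) ℝ := W - (X * A + vecMulVec v ξ) with hZdef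
    have hZ1 : Xᵀ * Z + Zᵀ * X = 0 := by
      have e1 : Xᵀ * Z = Xᵀ * W - A := by
        rw [hZdef, Matrix.mul_sub, Matrix.mul_add, ← Matrix.mul_assoc, hX, Matrix.one_mul,
          mul_vecMulVec', hXv]
        ext i j; simp [vecMulVec_apply]
      have e2 : Zᵀ * X = Wᵀ * X - Aᵀ := by
        rw [hZdef, Matrix.transpose_sub, Matrix.transpose_add, Matrix.transpose_mul,
          transpose_vecMulVec', Matrix.sub_mul, Matrix.add_mul, Matrix.mul_assoc, hX,
          Matrix.mul_one, vecMulVec_mul', hXv]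
        ext i j; simp [vecMulVec_apply]
      rw [e1, e2, hA]
      rw [hAdef]
      ext i j
      simp [Matrix.add_apply, Matrix.sub_apply, Matrix.smul_apply]
      ring
    have hZ2 : Zᵀ *ᵥ v = 0 := by
      have : Zᵀ = Wᵀ - (Aᵀ * Xᵀ + vecMulVec ξ v) := by
        rw [hZdef]; rw [Matrix.transpose_sub, Matrix.transpose_add, Matrix.transpose_mul,
          transpose_vecMulVec']
      rw [this, Matrix.sub_mulVec, Matrix.add_mulVec, ← Matrix.mulVec_mulVec, hXv,
        vecMulVec_mulVec']
      have : (v ⬝ᵥ v) • ξ = Wᵀ *ᵥ v := by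
        rw [hξdef, smul_smul, mul_inv_cancel₀ hvv, one_smul]
      rw [this]
      simp
    have hWZ : Matrix.trace (Wᵀ * Z) = 0 := h Z hZ1 hZ2
    have hNZ : Matrix.trace ((X * A + vecMulVec v ξ)ᵀ * Z) = 0 :=
      ortho_aux v X A ξ hA Z hZ1 hZ2
    have hZZ : Matrix.trace (Zᵀ * Z) = 0 := by
      have : Zᵀ * Z = Wᵀ * Z - (X * A + vecMulVec v ξ)ᵀ * Z := by
        rw [hZdef, Matrix.transpose_sub, Matrix.sub_mul]
      rw [this, Matrix.trace_sub, hWZ, hNZ, sub_zero]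
    have hZ0 : Z = 0 := frob_zero_aux Z hZZ
    refine ⟨A, ξ, hA, ?_⟩
    have := sub_eq_zero.mp (hZdef ▸ hZ0)
    linear_combination (norm := abel) this
  · rintro ⟨A, ξ, hA, rfl⟩ Z hZ1 hZ2
    exact ortho_aux v X A ξ hA Z hZ1 hZ2
end

section
/- Let v ∈ ℝⁿ be nonzero and X ∈ B_v(n,r). For any Z ∈ ℝ^{n×r}, the orthogonal projection of Z onto the tangent space T_X B_v(n,r) = {Z' : XᵀZ' + Z'ᵀX = 0, Z'ᵀv = 0} equals P(Z) − X·sym(XᵀP(Z)), where P(Z) = (I_n − vvᵀ/‖v‖²)Z and sym(A) = (A+Aᵀ)/2. -/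
open Matrix

/-- The symmetric part of a square matrix: `sym(A) = (A + Aᵀ)/2`. -/
noncomputable def msym {r : ℕ} (A : Matrix (Fin r) (Fin r) ℝ) :
    Matrix (Fin r) (Fin r) ℝ :=
  (2 : ℝ)⁻¹ • (A + Aᵀ)

/-!
Write `P = P(Z)` and `S = sym(XᵀP)`, so that `R = P − XS` and `Z − R = (Z − P) + XS`.
Since `XᵀX = I`, `XᵀR = XᵀP − S`, hence `XᵀR + RᵀX = (XᵀP) + (XᵀP)ᵀ − 2S = 0`; and
`Rᵀv = Pᵀv − S·Xᵀv = 0`. For a tangent `H`, the first part of the residual is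
`Z − P = vvᵀZ/‖v‖²`, orthogonal to `H` because `vvᵀH = v(Hᵀv)ᵀ = 0`; the second part
gives `tr(S·XᵀH)`, the pairing of a symmetric with a skew-symmetric matrix, which vanishes.
-/

section

variable {m n K : Type*} [Fintype n]

lemma trace_mul_eq_zero_of_transpose_eq_neg [CommRing K] [NoZeroDivisors K] [CharZero K]
    {S A : Matrix n n K} (hS : Sᵀ = S) (hA : Aᵀ = -A) : trace (S * A) = 0 := by
  rw [← CharZero.eq_neg_self_iff]
  calc trace (S * A) = trace (S * A)ᵀ := (trace_transpose _).symm
    _ = -trace (S * A) := by rw [transpose_mul, hA, hS, neg_mul, trace_neg, trace_mul_comm]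

lemma vecMulVec_self_mul_eq_zero [CommSemiring K] {v : n → K} {H : Matrix n m K}
    (hHv : Hᵀ *ᵥ v = 0) : vecMulVec v v * H = 0 := by
  rw [vecMulVec_mul, ← mulVec_transpose, hHv]
  exact ext fun _ _ => mul_zero _

noncomputable def projPerp (v : n → ℝ) (Z : Matrix n m ℝ) : Matrix n m ℝ :=
  Z - (∑ i, v i ^ 2)⁻¹ • (vecMulVec v v * Z)

lemma transpose_projPerp_mulVec_self {v : n → ℝ} (hv : v ≠ 0) (Z : Matrix n m ℝ) :
    (projPerp v Z)ᵀ *ᵥ v = 0 := by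
  have hvv : ∑ i, v i ^ 2 = v ⬝ᵥ v := by simp only [dotProduct, sq]
  have hvv_ne : v ⬝ᵥ v ≠ 0 := dotProduct_self_eq_zero.not.mpr hv
  rw [projPerp, transpose_sub, transpose_smul, transpose_mul, transpose_vecMulVec, sub_mulVec,
    smul_mulVec, ← mulVec_mulVec, vecMulVec_mulVec, op_smul_eq_smul, mulVec_smul, smul_smul,
    hvv, inv_mul_cancel₀ hvv_ne, one_smul, sub_self]

lemma trace_transpose_sub_projPerp_mul_eq_zero [Fintype m] (v : n → ℝ) (Z : Matrix n m ℝ)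
    {H : Matrix n m ℝ} (hHv : Hᵀ *ᵥ v = 0) : trace ((Z - projPerp v Z)ᵀ * H) = 0 := by
  rw [projPerp, sub_sub_cancel, transpose_smul, transpose_mul, transpose_vecMulVec, smul_mul,
    Matrix.mul_assoc, vecMulVec_self_mul_eq_zero hHv, Matrix.mul_zero, smul_zero, trace_zero]

end

section

variable {n r : ℕ}

lemma msym_transpose (A : Matrix (Fin r) (Fin r) ℝ) : (msym A)ᵀ = msym A := by
  rw [msym, transpose_smul, transpose_add, transpose_transpose, add_comm]

lemma msym_add_msym (A : Matrix (Fin r) (Fin r) ℝ) : msym A + msym A = A + Aᵀ := by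
  rw [msym, ← two_smul ℝ, smul_smul, mul_inv_cancel₀ two_ne_zero, one_smul]

lemma transpose_mul_sub_mul_msym_add_eq_zero {X : Matrix (Fin n) (Fin r) ℝ} (hX : Xᵀ * X = 1)
    (P : Matrix (Fin n) (Fin r) ℝ) :
    Xᵀ * (P - X * msym (Xᵀ * P)) + (P - X * msym (Xᵀ * P))ᵀ * X = 0 := by
  rw [transpose_sub, transpose_mul, msym_transpose, Matrix.mul_sub, Matrix.sub_mul,
    ← Matrix.mul_assoc, hX, Matrix.one_mul, Matrix.mul_assoc, hX, Matrix.mul_one,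
    sub_add_sub_comm, msym_add_msym, transpose_mul, transpose_transpose, sub_self]

lemma trace_transpose_mul_msym_mul_eq_zero {X H : Matrix (Fin n) (Fin r) ℝ}
    (hH : Xᵀ * H + Hᵀ * X = 0) (A : Matrix (Fin r) (Fin r) ℝ) :
    trace ((X * msym A)ᵀ * H) = 0 := by
  have hskew : (Xᵀ * H)ᵀ = -(Xᵀ * H) := by
    rw [transpose_mul, transpose_transpose, eq_neg_iff_add_eq_zero, add_comm, hH]
  rw [transpose_mul, msym_transpose, Matrix.mul_assoc]
  exact trace_mul_eq_zero_of_transpose_eq_neg (msym_transpose A) hskew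

end

/-- For `X ∈ B_v(n,r)` (`v ≠ 0`) and any `Z`, with `P(Z) = (I − vvᵀ/‖v‖²)Z`, the matrix
`R = P(Z) − X·sym(Xᵀ P(Z))` is the orthogonal projection of `Z` onto the tangent space
`{Z' : XᵀZ' + Z'ᵀX = 0, Z'ᵀv = 0}`: it lies in the tangent space and the residual
`Z − R` is trace-orthogonal to every tangent vector. -/
theorem projection_tangent_restricted_stiefel {n r : ℕ} (v : Fin n → ℝ) (hv : v ≠ 0)
    (X : Matrix (Fin n) (Fin r) ℝ) (hX : Xᵀ * X = 1) (hXv : Xᵀ *ᵥ v = 0)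
    (Z : Matrix (Fin n) (Fin r) ℝ) :
    let P : Matrix (Fin n) (Fin r) ℝ := Z - (∑ i, (v i) ^ 2)⁻¹ • (vecMulVec v v * Z)
    let R : Matrix (Fin n) (Fin r) ℝ := P - X * msym (Xᵀ * P)
    (Xᵀ * R + Rᵀ * X = 0) ∧ (Rᵀ *ᵥ v = 0) ∧
    (∀ H : Matrix (Fin n) (Fin r) ℝ,
        Xᵀ * H + Hᵀ * X = 0 → Hᵀ *ᵥ v = 0 → Matrix.trace ((Z - R)ᵀ * H) = 0) := by
  intro P R
  have hZR : Z - R = (Z - projPerp v Z) + X * msym (Xᵀ * P) := by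
    simp only [R, P, projPerp]
    abel
  refine ⟨transpose_mul_sub_mul_msym_add_eq_zero hX P, ?_, fun H hH hHv => ?_⟩
  · rw [transpose_sub, sub_mulVec, transpose_mul, ← mulVec_mulVec, hXv, mulVec_zero, sub_zero]
    exact transpose_projPerp_mulVec_self hv Z
  · rw [hZR, transpose_add, Matrix.add_mul, trace_add,
      trace_transpose_sub_projPerp_mul_eq_zero v Z hHv,
      trace_transpose_mul_msym_mul_eq_zero hH, add_zero]
end

section
/- Fix c > 0 and γ > 0. Define θ : ℝ → ℝ by θ(x) = 0 if |x| < c, θ(x) = (c·sgn(x) − x)²/(2γ) if c ≤ |x| ≤ c+γ, and θ(x) = |x| − γ/2 − c if |x| > c+γ. Then for every x ∈ ℝ, θ(x) = min_{z∈ℝ} [ (z−x)²/(2γ) + h_c(z) ], where h_c(z) = max(0, z−c) − min(0, z+c) is the distance from z to the interval [−c, c]. -/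
/-- The Moreau envelope of the distance `h_c(z) = max(0, z−c) − min(0, z+c)` from the
interval `[−c, c]` with parameter `γ` equals (with attainment) the piecewise function
`θ(x) = 0` for `|x| < c`, `θ(x) = (c·sgn x − x)²/(2γ)` for `c ≤ |x| ≤ c+γ`, and
`θ(x) = |x| − γ/2 − c` for `|x| > c+γ`. -/
theorem moreau_envelope_dist_box (c γ : ℝ) (hc : 0 < c) (hγ : 0 < γ) (x : ℝ) :
    IsLeast {y : ℝ | ∃ z : ℝ, y = (z - x) ^ 2 / (2 * γ) + (max 0 (z - c) - min 0 (z + c))}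
      (if |x| < c then 0
       else if |x| ≤ c + γ then (c * Real.sign x - x) ^ 2 / (2 * γ)
       else |x| - γ / 2 - c) := by
  have h2γ : (0:ℝ) < 2 * γ := by linarith
  constructor
  · -- membership
    split_ifs with h1 h2
    · refine ⟨x, ?_⟩
      rw [abs_lt] at h1
      rw [max_eq_left (by linarith : x - c ≤ 0), min_eq_left (by linarith : (0:ℝ) ≤ x + c)]
      rw [sub_self, sub_self]
      simp
    · push_neg at h1
      rcases lt_trichotomy x 0 with hx | hx | hx
      · refine ⟨-c, ?_⟩
        rw [Real.sign_of_neg hx]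
        rw [max_eq_left (by linarith : -c - c ≤ 0),
            min_eq_left (by linarith : (0:ℝ) ≤ -c + c)]
        ring
      · exfalso; rw [hx, abs_zero] at h1; linarith
      · refine ⟨c, ?_⟩
        rw [Real.sign_of_pos hx]
        rw [max_eq_left (by linarith : c - c ≤ 0),
            min_eq_left (by linarith : (0:ℝ) ≤ c + c)]
        ring
    · push_neg at h1 h2
      rcases lt_trichotomy x 0 with hx | hx | hx
      · refine ⟨x + γ, ?_⟩
        rw [abs_of_neg hx] at h2 ⊢
        rw [max_eq_left (by linarith : x + γ - c ≤ 0),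
            min_eq_right (by linarith : x + γ + c ≤ 0)]
        field_simp
        ring
      · exfalso; rw [hx, abs_zero] at h2; linarith
      · refine ⟨x - γ, ?_⟩
        rw [abs_of_pos hx] at h2 ⊢
        rw [max_eq_right (by linarith : (0:ℝ) ≤ x - γ - c),
            min_eq_left (by linarith : (0:ℝ) ≤ x - γ + c)]
        field_simp
        ring
  · rintro y ⟨z, rfl⟩
    split_ifs with h1 h2
    · have h0 : 0 ≤ (z - x) ^ 2 / (2 * γ) := by positivity
      have hm : (0:ℝ) ≤ max 0 (z - c) := le_max_left _ _
      have hm2 : min 0 (z + c) ≤ 0 := min_le_left _ _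
      linarith
    · push_neg at h1
      rw [div_add' _ _ _ (ne_of_gt h2γ), le_div_iff₀ h2γ, div_mul_cancel₀ _ (ne_of_gt h2γ)]
      rcases lt_trichotomy x 0 with hx | hx | hx
      · rw [Real.sign_of_neg hx]
        rw [abs_of_neg hx] at h1 h2
        rcases le_total z (-c) with hz | hz
        · rw [max_eq_left (by linarith), min_eq_right (by linarith)]
          nlinarith [sq_nonneg (z + c + x), sq_nonneg (c + z),
            mul_nonneg (by linarith : (0:ℝ) ≤ -c - z) (by linarith : (0:ℝ) ≤ γ + x + c)]
        · rcases le_total z c with hz2 | hz2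
          · rw [max_eq_left (by linarith), min_eq_left (by linarith)]
            nlinarith [mul_nonneg (by linarith : (0:ℝ) ≤ z + c)
              (by linarith : (0:ℝ) ≤ z - c - 2 * x)]
          · rw [max_eq_right (by linarith), min_eq_left (by linarith)]
            nlinarith [mul_nonneg (by linarith : (0:ℝ) ≤ z + c)
                (by linarith : (0:ℝ) ≤ z - c - 2 * x),
              mul_nonneg (le_of_lt hγ) (by linarith : (0:ℝ) ≤ z - c)]
      · exfalso; rw [hx, abs_zero] at h1; linarith
      · rw [Real.sign_of_pos hx]
        rw [abs_of_pos hx] at h1 h2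
        rcases le_total z (-c) with hz | hz
        · rw [max_eq_left (by linarith), min_eq_right (by linarith)]
          nlinarith [mul_nonneg (by linarith : (0:ℝ) ≤ c - z)
              (by linarith : (0:ℝ) ≤ 2 * x - z - c),
            mul_nonneg (le_of_lt hγ) (by linarith : (0:ℝ) ≤ -z - c)]
        · rcases le_total z c with hz2 | hz2
          · rw [max_eq_left (by linarith), min_eq_left (by linarith)]
            nlinarith [mul_nonneg (by linarith : (0:ℝ) ≤ c - z)
              (by linarith : (0:ℝ) ≤ 2 * x - z - c)]
          · rw [max_eq_right (by linarith), min_eq_left (by linarith)]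
            nlinarith [mul_nonneg (by linarith : (0:ℝ) ≤ z - c)
              (by linarith : (0:ℝ) ≤ γ - x + c)]
    · push_neg at h1 h2
      rw [div_add' _ _ _ (ne_of_gt h2γ), le_div_iff₀ h2γ]
      rcases lt_trichotomy x 0 with hx | hx | hx
      · rw [abs_of_neg hx] at h2 ⊢
        rcases le_total z (-c) with hz | hz
        · rw [max_eq_left (by linarith), min_eq_right (by linarith)]
          nlinarith [sq_nonneg (z - x - γ)]
        · rcases le_total z c with hz2 | hz2
          · rw [max_eq_left (by linarith), min_eq_left (by linarith)]
            nlinarith [sq_nonneg (-x - c - γ),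
              mul_nonneg (by linarith : (0:ℝ) ≤ z + c)
                (by linarith : (0:ℝ) ≤ z - c - 2 * x)]
          · rw [max_eq_right (by linarith), min_eq_left (by linarith)]
            nlinarith [sq_nonneg (-x - c - γ),
              mul_nonneg (by linarith : (0:ℝ) ≤ z + c)
                (by linarith : (0:ℝ) ≤ z - c - 2 * x),
              mul_nonneg (le_of_lt hγ) (by linarith : (0:ℝ) ≤ z - c)]
      · exfalso; rw [hx, abs_zero] at h2; linarith
      · rw [abs_of_pos hx] at h2 ⊢
        rcases le_total z (-c) with hz | hz
        · rw [max_eq_left (by linarith), min_eq_right (by linarith)]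
          nlinarith [sq_nonneg (x - c - γ),
            mul_nonneg (by linarith : (0:ℝ) ≤ c - z)
              (by linarith : (0:ℝ) ≤ 2 * x - z - c),
            mul_nonneg (le_of_lt hγ) (by linarith : (0:ℝ) ≤ -z - c)]
        · rcases le_total z c with hz2 | hz2
          · rw [max_eq_left (by linarith), min_eq_left (by linarith)]
            nlinarith [sq_nonneg (x - c - γ),
              mul_nonneg (by linarith : (0:ℝ) ≤ c - z)
                (by linarith : (0:ℝ) ≤ 2 * x - z - c)]
          · rw [max_eq_right (by linarith), min_eq_left (by linarith)]
            nlinarith [sq_nonneg (z - x + γ)]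
end

section
/- Let X̄ ∈ St(n,r) ∩ Λ with Λ = {X ∈ ℝ^{n×r} : |X_{ij}| ≤ 1/√n for all i,j}, and set δ = 1/(2√n). Then for every X ∈ Λ with ‖X − X̄‖_F ≤ δ, one has dist(X, St(n,r) ∩ Λ) ≤ 2√(nr) · dist(X, St(n,r)), where dist denotes the Frobenius-norm distance to a set. -/
open Matrix

set_option maxHeartbeats 1000000

/-- Frobenius norm of a real matrix. -/
noncomputable def fnorm {n r : ℕ} (X : Matrix (Fin n) (Fin r) ℝ) : ℝ :=
  Real.sqrt (∑ i, ∑ j, (X i j) ^ 2)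

/-- Frobenius-norm distance from a matrix to a set of matrices. -/
noncomputable def fdist {n r : ℕ} (X : Matrix (Fin n) (Fin r) ℝ)
    (S : Set (Matrix (Fin n) (Fin r) ℝ)) : ℝ :=
  sInf ((fun Y => fnorm (X - Y)) '' S)

lemma fnorm_nonneg' {n r : ℕ} (X : Matrix (Fin n) (Fin r) ℝ) : 0 ≤ fnorm X :=
  Real.sqrt_nonneg _

lemma sq_fnorm' {n r : ℕ} (X : Matrix (Fin n) (Fin r) ℝ) :
    fnorm X ^ 2 = ∑ i, ∑ j, (X i j) ^ 2 := by
  rw [fnorm, Real.sq_sqrt]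
  exact Finset.sum_nonneg fun i _ => Finset.sum_nonneg fun j _ => sq_nonneg _

/-- For `X̄ ∈ St(n,r) ∩ Λ` with `Λ` the box of radius `1/√n` and `δ = 1/(2√n)`:
every `X ∈ Λ` with `‖X − X̄‖_F ≤ δ` satisfies
`dist(X, St(n,r) ∩ Λ) ≤ 2√(nr)·dist(X, St(n,r))`. -/
theorem local_error_bound_box_stiefel {n r : ℕ} (hr : 1 ≤ r) (hnr : r < n)
    (Xb : Matrix (Fin n) (Fin r) ℝ)
    (hXb1 : Xbᵀ * Xb = 1) (hXb2 : ∀ i j, |Xb i j| ≤ 1 / Real.sqrt n)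
    (X : Matrix (Fin n) (Fin r) ℝ)
    (hX : ∀ i j, |X i j| ≤ 1 / Real.sqrt n)
    (hclose : fnorm (X - Xb) ≤ 1 / (2 * Real.sqrt n)) :
    fdist X {Y | Yᵀ * Y = 1 ∧ ∀ i j, |Y i j| ≤ 1 / Real.sqrt n} ≤
      2 * Real.sqrt (n * r) * fdist X {Y | Yᵀ * Y = 1} := by
  have hn0 : 0 < n := lt_trans (lt_of_lt_of_le Nat.zero_lt_one hr) hnr
  have hnR : (0:ℝ) < n := by exact_mod_cast hn0
  have hrR : (0:ℝ) < r := by exact_mod_cast lt_of_lt_of_le Nat.zero_lt_one hr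
  have hs : (0:ℝ) < Real.sqrt n := Real.sqrt_pos.2 hnR
  have hsr : (0:ℝ) < Real.sqrt r := Real.sqrt_pos.2 hrR
  set c : ℝ := 1 / Real.sqrt n with hc
  have hc0 : 0 < c := by positivity
  have hc2 : c ^ 2 = 1 / n := by
    rw [hc, div_pow, one_pow, Real.sq_sqrt hnR.le]
  set a : ℝ := fnorm (X - Xb) with ha
  have ha0 : 0 ≤ a := fnorm_nonneg' _
  have ha2 : a ^ 2 = ∑ i, ∑ j, (X i j - Xb i j) ^ 2 := by
    rw [ha, sq_fnorm']; simp [Matrix.sub_apply]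
  -- entries of Xb square to 1/n
  have hentry : ∀ i j, (Xb i j) ^ 2 = 1 / n := by
    intro i j
    have hcol : ∑ i, (Xb i j) ^ 2 = 1 := by
      have := congrFun (congrFun hXb1 j) j
      simp only [Matrix.mul_apply, Matrix.transpose_apply, Matrix.one_apply_eq] at this
      simpa [pow_two] using this
    have hle : ∀ i ∈ Finset.univ, (Xb i j) ^ 2 ≤ 1 / (n:ℝ) := by
      intro i _
      have h1 : (Xb i j) ^ 2 ≤ (1 / Real.sqrt n) ^ 2 := by
        have h2 := hXb2 i j
        nlinarith [abs_nonneg (Xb i j), sq_abs (Xb i j)]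
      rwa [div_pow, one_pow, Real.sq_sqrt hnR.le] at h1
    have hsum : ∑ _i : Fin n, (1 : ℝ) / n = 1 := by
      rw [Finset.sum_const, Finset.card_univ, Fintype.card_fin, nsmul_eq_mul]
      field_simp
    have := (Finset.sum_eq_sum_iff_of_le hle).1 (by rw [hcol, hsum])
    exact this i (Finset.mem_univ i)
  -- each entry difference is small
  have hsmall : ∀ i j, |X i j - Xb i j| ≤ c / 2 := by
    intro i j
    have h1 : (X i j - Xb i j) ^ 2 ≤ a ^ 2 := by
      rw [ha2]
      calc (X i j - Xb i j) ^ 2 ≤ ∑ j', (X i j' - Xb i j') ^ 2 :=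
            Finset.single_le_sum (f := fun j' => (X i j' - Xb i j') ^ 2)
              (fun j' _ => sq_nonneg _) (Finset.mem_univ j)
        _ ≤ ∑ i', ∑ j', (X i' j' - Xb i' j') ^ 2 :=
            Finset.single_le_sum
              (f := fun i' => ∑ j', (X i' j' - Xb i' j') ^ 2)
              (fun i' _ => Finset.sum_nonneg fun j' _ => sq_nonneg _)
              (Finset.mem_univ i)
    have h2 : a ≤ c / 2 := by
      calc a ≤ 1 / (2 * Real.sqrt n) := hclose
        _ = c / 2 := by rw [hc]; ring
    calc |X i j - Xb i j| = Real.sqrt ((X i j - Xb i j) ^ 2) := (Real.sqrt_sq_eq_abs _).symm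
      _ ≤ Real.sqrt (a ^ 2) := Real.sqrt_le_sqrt h1
      _ = a := Real.sqrt_sq ha0
      _ ≤ c / 2 := h2
  -- key entrywise inequality
  have hkey : ∀ i j, (X i j) ^ 2 + (3/2) * c * |X i j - Xb i j| ≤ c ^ 2 := by
    intro i j
    have hu : (Xb i j) ^ 2 = c ^ 2 := by rw [hentry i j, hc2]
    have hxc : |X i j| ≤ c := hX i j
    have ht : |X i j - Xb i j| ≤ c / 2 := hsmall i j
    have hux : Xb i j = c ∨ Xb i j = -c := sq_eq_sq_iff_eq_or_eq_neg.1 (by rw [hu]) |>.imp id id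
    rcases abs_le.1 hxc with ⟨hx1, hx2⟩
    rcases hux with h | h
    · have habs : |X i j - Xb i j| = c - X i j := by
        rw [h, abs_sub_comm, abs_of_nonneg (by linarith)]
      rw [habs] at ht ⊢
      nlinarith
    · have habs : |X i j - Xb i j| = X i j + c := by
        rw [h, sub_neg_eq_add, abs_of_nonneg (by linarith)]
      rw [habs] at ht ⊢
      nlinarith
  -- T and the sums
  set T : ℝ := ∑ i, ∑ j, |X i j - Xb i j| with hT
  have hT0 : 0 ≤ T :=
    Finset.sum_nonneg fun i _ => Finset.sum_nonneg fun j _ => abs_nonneg _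
  have hTa : a ≤ T := by
    have h1 : a ^ 2 ≤ T ^ 2 := by
      rw [ha2, hT]
      have : ∀ i : Fin n, ∑ j, (X i j - Xb i j) ^ 2 ≤ (∑ j, |X i j - Xb i j|) ^ 2 := by
        intro i
        calc ∑ j, (X i j - Xb i j) ^ 2 = ∑ j, |X i j - Xb i j| ^ 2 := by
              simp [sq_abs]
          _ ≤ (∑ j, |X i j - Xb i j|) ^ 2 :=
              Finset.sum_sq_le_sq_sum_of_nonneg fun j _ => abs_nonneg _
      calc ∑ i, ∑ j, (X i j - Xb i j) ^ 2 ≤ ∑ i, (∑ j, |X i j - Xb i j|) ^ 2 :=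
            Finset.sum_le_sum fun i _ => this i
        _ ≤ (∑ i, ∑ j, |X i j - Xb i j|) ^ 2 :=
            Finset.sum_sq_le_sq_sum_of_nonneg fun i _ =>
              Finset.sum_nonneg fun j _ => abs_nonneg _
    nlinarith
  -- norm of X
  set p : ℝ := Real.sqrt (∑ i, ∑ j, (X i j) ^ 2) with hp
  have hp0 : 0 ≤ p := Real.sqrt_nonneg _
  have hXsum0 : 0 ≤ ∑ i, ∑ j, (X i j) ^ 2 :=
    Finset.sum_nonneg fun i _ => Finset.sum_nonneg fun j _ => sq_nonneg _
  have hp2 : p ^ 2 = ∑ i, ∑ j, (X i j) ^ 2 := Real.sq_sqrt hXsum0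
  have hpbound : p ^ 2 + (3/2) * c * T ≤ r := by
    rw [hp2, hT]
    have h1 : ∑ i, ∑ j, ((X i j) ^ 2 + (3/2) * c * |X i j - Xb i j|) ≤
        ∑ i : Fin n, ∑ j : Fin r, c ^ 2 :=
      Finset.sum_le_sum fun i _ => Finset.sum_le_sum fun j _ => hkey i j
    have h2 : ∑ i : Fin n, ∑ j : Fin r, c ^ 2 = (r : ℝ) := by
      rw [hc2]
      simp [Finset.sum_const, Finset.card_univ, nsmul_eq_mul]
      field_simp
    simp only [Finset.sum_add_distrib, ← Finset.mul_sum] at h1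
    rw [h2] at h1
    linarith [h1]
  have hpr : p ≤ Real.sqrt r := by
    rw [← Real.sqrt_sq hp0]
    apply Real.sqrt_le_sqrt
    nlinarith
  -- core inequality against any Stiefel point
  have hcore : ∀ Y : Matrix (Fin n) (Fin r) ℝ, Yᵀ * Y = 1 →
      a ≤ 2 * Real.sqrt (n * r) * fnorm (X - Y) := by
    intro Y hY
    set b : ℝ := fnorm (X - Y) with hb
    have hb0 : 0 ≤ b := fnorm_nonneg' _
    have hYsum : ∑ i, ∑ j, (Y i j) ^ 2 = r := by
      have h : ∀ j : Fin r, ∑ i, (Y i j) ^ 2 = 1 := by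
        intro j
        have := congrFun (congrFun hY j) j
        simp only [Matrix.mul_apply, Matrix.transpose_apply, Matrix.one_apply_eq] at this
        simpa [pow_two] using this
      rw [Finset.sum_comm]
      simp [h]
    have hb2 : b ^ 2 = ∑ i, ∑ j, (X i j - Y i j) ^ 2 := by
      rw [hb, sq_fnorm']; simp [Matrix.sub_apply]
    -- Cauchy-Schwarz: ∑ X Y ≤ p * sqrt r
    have hCS : ∑ i, ∑ j, X i j * Y i j ≤ p * Real.sqrt r := by
      have hcs2 : (∑ ij : Fin n × Fin r, X ij.1 ij.2 * Y ij.1 ij.2) ^ 2 ≤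
          (∑ ij : Fin n × Fin r, (X ij.1 ij.2) ^ 2) *
          (∑ ij : Fin n × Fin r, (Y ij.1 ij.2) ^ 2) :=
        Finset.sum_mul_sq_le_sq_mul_sq _ _ _
      have e1 : ∑ ij : Fin n × Fin r, X ij.1 ij.2 * Y ij.1 ij.2 =
          ∑ i, ∑ j, X i j * Y i j := Fintype.sum_prod_type _
      have e2 : ∑ ij : Fin n × Fin r, (X ij.1 ij.2) ^ 2 =
          ∑ i, ∑ j, (X i j) ^ 2 := Fintype.sum_prod_type _
      have e3 : ∑ ij : Fin n × Fin r, (Y ij.1 ij.2) ^ 2 =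
          ∑ i, ∑ j, (Y i j) ^ 2 := Fintype.sum_prod_type _
      rw [e1, e2, e3, hYsum, ← hp2] at hcs2
      calc ∑ i, ∑ j, X i j * Y i j ≤ |∑ i, ∑ j, X i j * Y i j| := le_abs_self _
        _ = Real.sqrt ((∑ i, ∑ j, X i j * Y i j) ^ 2) := (Real.sqrt_sq_eq_abs _).symm
        _ ≤ Real.sqrt (p ^ 2 * r) := Real.sqrt_le_sqrt hcs2
        _ = p * Real.sqrt r := by
            rw [Real.sqrt_mul (sq_nonneg p), Real.sqrt_sq hp0]
    -- b ≥ sqrt r - p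
    have hbge : Real.sqrt r - p ≤ b := by
      have hexp : b ^ 2 = (∑ i, ∑ j, (X i j) ^ 2) + (∑ i, ∑ j, (Y i j) ^ 2)
          - 2 * ∑ i, ∑ j, X i j * Y i j := by
        rw [hb2]
        have hpt : ∀ i j, (X i j - Y i j) ^ 2 =
            ((X i j) ^ 2 + (Y i j) ^ 2) - 2 * (X i j * Y i j) := fun i j => by ring
        simp_rw [hpt, Finset.sum_sub_distrib, Finset.sum_add_distrib, ← Finset.mul_sum]
      have hqb : (Real.sqrt r - p) ^ 2 ≤ b ^ 2 := by
        have hq := Real.sq_sqrt hrR.le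
        have hexpand : (Real.sqrt r - p) ^ 2 = (r : ℝ) - 2 * (Real.sqrt r * p) + p ^ 2 := by
          linear_combination hq
        rw [hexp, ← hp2, hYsum, hexpand]
        have := hCS
        linarith [mul_comm (Real.sqrt r) p]
      calc Real.sqrt r - p ≤ |Real.sqrt r - p| := le_abs_self _
        _ = Real.sqrt ((Real.sqrt r - p) ^ 2) := (Real.sqrt_sq_eq_abs _).symm
        _ ≤ Real.sqrt (b ^ 2) := Real.sqrt_le_sqrt hqb
        _ = b := Real.sqrt_sq hb0
    -- combine
    have hmain : (3/2) * c * a ≤ 2 * Real.sqrt r * b := by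
      have h1 : (Real.sqrt r - p) * (Real.sqrt r + p) = (r : ℝ) - p ^ 2 := by
        have hq := Real.sq_sqrt hrR.le
        linear_combination hq
      have h2 : (r : ℝ) - p ^ 2 ≥ (3/2) * c * T := by linarith
      have h3 : Real.sqrt r + p ≤ 2 * Real.sqrt r := by linarith
      have h4 : (Real.sqrt r - p) * (Real.sqrt r + p) ≤ b * (2 * Real.sqrt r) := by
        have hrp0 : 0 ≤ Real.sqrt r - p := by linarith
        have : (Real.sqrt r - p) * (Real.sqrt r + p) ≤ b * (Real.sqrt r + p) := by
          apply mul_le_mul_of_nonneg_right hbge (by positivity)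
        calc (Real.sqrt r - p) * (Real.sqrt r + p) ≤ b * (Real.sqrt r + p) := this
          _ ≤ b * (2 * Real.sqrt r) := mul_le_mul_of_nonneg_left h3 hb0
      have h5 : (3/2) * c * a ≤ (3/2) * c * T := by
        apply mul_le_mul_of_nonneg_left hTa (by positivity)
      calc (3/2) * c * a ≤ (3/2) * c * T := h5
        _ ≤ (Real.sqrt r - p) * (Real.sqrt r + p) := by linarith [h1, h2]
        _ ≤ b * (2 * Real.sqrt r) := h4
        _ = 2 * Real.sqrt r * b := by ring
    have hsqrtnr : Real.sqrt (n * r) = Real.sqrt n * Real.sqrt r := by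
      rw [← Real.sqrt_mul hnR.le]
    -- from (3/2) * (1/√n) * a ≤ 2 √r b  conclude a ≤ 2 √n √r b
    rw [hsqrtnr]
    have hnn : 0 ≤ Real.sqrt n * Real.sqrt r * b :=
      mul_nonneg (mul_nonneg hs.le hsr.le) hb0
    rw [hc] at hmain
    calc a = Real.sqrt n * ((3/2) * (1 / Real.sqrt n) * a) * (2/3) := by
          field_simp
      _ ≤ Real.sqrt n * (2 * Real.sqrt r * b) * (2/3) := by
          apply mul_le_mul_of_nonneg_right _ (by norm_num)
          exact mul_le_mul_of_nonneg_left hmain hs.le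
      _ = (4/3) * (Real.sqrt n * Real.sqrt r * b) := by ring
      _ ≤ 2 * (Real.sqrt n * Real.sqrt r * b) := by linarith
      _ = 2 * (Real.sqrt n * Real.sqrt r) * b := by ring
  -- Now conclude via sInf arguments
  have hXbmem : Xb ∈ {Y : Matrix (Fin n) (Fin r) ℝ | Yᵀ * Y = 1 ∧ ∀ i j, |Y i j| ≤ 1 / Real.sqrt n} :=
    ⟨hXb1, hXb2⟩
  have hstep1 : fdist X {Y | Yᵀ * Y = 1 ∧ ∀ i j, |Y i j| ≤ 1 / Real.sqrt n} ≤ a := by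
    apply csInf_le
    · exact ⟨0, fun z hz => by
        obtain ⟨Y, _, rfl⟩ := hz
        exact fnorm_nonneg' _⟩
    · exact ⟨Xb, hXbmem, rfl⟩
  have hC0 : (0:ℝ) < 2 * Real.sqrt (n * r) := by positivity
  have hstep2 : a / (2 * Real.sqrt (n * r)) ≤ fdist X {Y | Yᵀ * Y = 1} := by
    apply le_csInf
    · exact ⟨fnorm (X - Xb), Xb, hXb1, rfl⟩
    · rintro z ⟨Y, hY, rfl⟩
      rw [div_le_iff₀ hC0]
      calc a ≤ 2 * Real.sqrt (n * r) * fnorm (X - Y) := hcore Y hY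
        _ = fnorm (X - Y) * (2 * Real.sqrt (n * r)) := by ring
  calc fdist X {Y | Yᵀ * Y = 1 ∧ ∀ i j, |Y i j| ≤ 1 / Real.sqrt n} ≤ a := hstep1
    _ = (a / (2 * Real.sqrt (n * r))) * (2 * Real.sqrt (n * r)) := by field_simp
    _ ≤ fdist X {Y | Yᵀ * Y = 1} * (2 * Real.sqrt (n * r)) :=
        mul_le_mul_of_nonneg_right hstep2 hC0.le
    _ = 2 * Real.sqrt (n * r) * fdist X {Y | Yᵀ * Y = 1} := by ring
end

section
/- Let M be a compact set, F : M → ℝ continuous with F ≥ F* on M, and suppose a sequence {X^k} ⊆ M satisfies the nonmonotone descent condition F(X^{k+1}) ≤ max_{j∈J_k} F(X^j) − (α/(2t_k))‖V^k‖_F², where J_k = {max{0,k−m},…,k}, t_k ∈ [ηt̄, t_max] and ‖V^k‖ = t_k‖g_k‖ with ‖g_k‖ > ε for all k < K. Then K ≤ (m+1)·(2(F(X⁰) − F*)/(α η t̄ ε²) + 1). -/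
/-- Iteration-complexity bound for the nonmonotone line-search gradient method:
if `a k = F(X^k)` is bounded below by `F*`, the nonmonotone descent condition
`a (k+1) ≤ max_{j ∈ J_k} a j − (α/(2 t_k))‖V^k‖²` holds with `J_k = {max(0,k−m),…,k}`,
step sizes satisfy `η t̄ ≤ t k ≤ t_max`, `‖V^k‖ = t k · ‖g k‖`, and `‖g k‖ > ε` for all
`k < K`, then `K ≤ (m+1)·(2(a 0 − F*)/(α η t̄ ε²) + 1)`. -/
theorem nonmonotone_iteration_complexity
    (α η tbar tmax ε Fstar : ℝ) (m K : ℕ)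
    (hα0 : 0 < α) (hα1 : α < 1) (hη0 : 0 < η) (hη1 : η < 1)
    (htbar : 0 < tbar) (hε : 0 < ε)
    (a t g v : ℕ → ℝ)
    (hlb : ∀ k, Fstar ≤ a k)
    (ht : ∀ k, η * tbar ≤ t k ∧ t k ≤ tmax)
    (hv : ∀ k, v k = t k * g k)
    (hg0 : ∀ k, 0 ≤ g k)
    (hgε : ∀ k < K, ε < g k)
    (hdesc : ∀ k, a (k + 1) ≤
      (Finset.Icc (k - m) k).sup' (Finset.nonempty_Icc.mpr (Nat.sub_le k m)) a
        - α / (2 * t k) * (v k) ^ 2) :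
    (K : ℝ) ≤ (m + 1) * (2 * (a 0 - Fstar) / (α * η * tbar * ε ^ 2) + 1) := by
  set δ : ℝ := α * η * tbar * ε ^ 2 / 2 with hδdef
  have htpos : ∀ k, 0 < t k := fun k => lt_of_lt_of_le (by positivity) (ht k).1
  have hδpos : 0 < δ := by positivity
  set A : ℕ → ℝ := fun k =>
    (Finset.Icc (k - m) k).sup' (Finset.nonempty_Icc.mpr (Nat.sub_le k m)) a with hAdef
  have hAmem : ∀ k j, k - m ≤ j → j ≤ k → a j ≤ A k := fun k j h1 h2 =>
    Finset.le_sup' a (Finset.mem_Icc.mpr ⟨h1, h2⟩)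
  have hgain : ∀ k < K, δ ≤ α / (2 * t k) * (v k) ^ 2 := by
    intro k hk
    have hg := hgε k hk
    have htk := htpos k
    rw [hv k]
    have heq : α / (2 * t k) * (t k * g k) ^ 2 = α * t k * (g k) ^ 2 / 2 := by
      field_simp
    rw [heq, hδdef]
    have h1 : η * tbar ≤ t k := (ht k).1
    have h2 : ε ^ 2 ≤ (g k) ^ 2 := by nlinarith
    have key : η * tbar * ε ^ 2 ≤ t k * g k ^ 2 :=
      mul_le_mul h1 h2 (sq_nonneg ε) htk.le
    nlinarith [mul_le_mul_of_nonneg_left key hα0.le]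
  have hnonneg : ∀ k, 0 ≤ α / (2 * t k) * (v k) ^ 2 := fun k => by
    have := htpos k; positivity
  have hAdec1 : ∀ k, A (k + 1) ≤ A k := by
    intro k
    apply Finset.sup'_le
    intro j hj
    obtain ⟨h1, h2⟩ := Finset.mem_Icc.mp hj
    rcases Nat.lt_or_ge j (k + 1) with h | h
    · exact hAmem k j (by omega) (by omega)
    · have hj' : j = k + 1 := le_antisymm h2 h
      subst hj'
      have := hdesc k
      have := hnonneg k
      rw [hAdef]
      dsimp only
      linarith
  have hAmono : ∀ i j, i ≤ j → A j ≤ A i := by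
    intro i j hij
    induction j with
    | zero => have : i = 0 := Nat.le_zero.mp hij; subst this; exact le_refl _
    | succ n ih =>
      rcases Nat.lt_or_ge i (n + 1) with h | h
      · exact le_trans (hAdec1 n) (ih (Nat.lt_succ_iff.mp h))
      · have hi : i = n + 1 := le_antisymm hij h
        subst hi; exact le_refl _
  have hblock : ∀ k, k + m < K → A (k + m + 1) ≤ A k - δ := by
    intro k hk
    apply Finset.sup'_le
    intro j hj
    obtain ⟨h1, h2⟩ := Finset.mem_Icc.mp hj
    have h1' : k + 1 ≤ j := by omega
    obtain ⟨i, rfl⟩ : ∃ i, j = i + 1 := ⟨j - 1, by omega⟩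
    have hik : k ≤ i := by omega
    have hiK : i < K := by omega
    have hd : a (i + 1) ≤ A i - α / (2 * t i) * v i ^ 2 := hdesc i
    have := hAmono k i hik
    have := hgain i hiK
    linarith
  have hiter : ∀ p : ℕ, (m + 1) * p ≤ K → A ((m + 1) * p) ≤ A 0 - p * δ := by
    intro p
    induction p with
    | zero => intro _; simp
    | succ q ih =>
      intro hle
      have heq : (m + 1) * (q + 1) = (m + 1) * q + m + 1 := by ring
      have hk : (m + 1) * q + m < K := by omega
      have hq : (m + 1) * q ≤ K := by omega
      have hb := hblock ((m + 1) * q) hk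
      have hih := ih hq
      rw [heq]
      push_cast
      linarith
  have hA0 : A 0 = a 0 := by
    rw [hAdef]
    simp
  have hAlb : ∀ k, Fstar ≤ A k := fun k =>
    le_trans (hlb k) (hAmem k k (Nat.sub_le k m) le_rfl)
  set p := K / (m + 1) with hp
  have hpK : (m + 1) * p ≤ K := Nat.mul_div_le K (m + 1)
  have h1 := hiter p hpK
  have h2 : (p : ℝ) * δ ≤ a 0 - Fstar := by
    have := hAlb ((m + 1) * p)
    rw [hA0] at h1
    linarith
  have hmod : K % (m + 1) < m + 1 := Nat.mod_lt _ (Nat.succ_pos m)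
  have e : (m + 1) * p + K % (m + 1) = K := Nat.div_add_mod K (m + 1)
  have hKp : K ≤ (m + 1) * p + m := by
    conv_lhs => rw [← e]
    exact Nat.add_le_add_left (Nat.lt_succ_iff.mp hmod) _
  have hcast : (K : ℝ) ≤ ((m : ℝ) + 1) * p + m := by exact_mod_cast hKp
  have hpC : (p : ℝ) ≤ 2 * (a 0 - Fstar) / (α * η * tbar * ε ^ 2) := by
    rw [le_div_iff₀ (by positivity)]
    rw [hδdef] at h2
    linarith
  have hmul : ((m : ℝ) + 1) * p ≤ ((m : ℝ) + 1) * (2 * (a 0 - Fstar) / (α * η * tbar * ε ^ 2)) :=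
    mul_le_mul_of_nonneg_left hpC (by positivity)
  linarith
end
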